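/- Suppose 1 ≤ m ≤ 2j+1 and gcd(m, 2j+1) = gcd(m+1, 2j+1) = 1. If for some (s,t) ∈ Z^2 the number of lattice points of Λ(m,j) in (s,t)+S(j) equals k, then for every (s',t') ∈ Z^2 the number of lattice points of Λ(m,j) in (s',t')+S(j) also equals k. -/

import Mathlib

/-!
With `n = 2j + 1` and `u = m s - t`, the lattice points in column `s + i` of the translated
staircase sit at heights `≡ m (s + i) (mod n)`, and the column has height `n - 1 - i < n`, so the
count is `#{i < n | (m i + u) % n < n - 1 - i}` (the extra column `i = 2j` is empty).
For `0 ≤ c ≤ n` one has `[x % n < c] = x / n - (x - c) / n`, which turns the count into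
`Σ (m i + u) / n - Σ ((m + 1) i + u + 1) / n + n`. As `m` and `m + 1` are units mod `n`, the
residues in each sum run over `0, …, n - 1`, whence `2 Σ_{i<n} (a i + b) / n = (a - 1)(n - 1) + 2b`
and the count is `(n - 1) / 2 = j`, independently of `s` and `t`.
-/

def Lam (m j : ℕ) : Set (ℝ × ℝ) :=
  {p | ∃ c₁ c₂ : ℤ, p = ((c₁ : ℝ), (c₁ : ℝ) * m + (c₂ : ℝ) * (2 * j + 1))}

def Sstair (j : ℕ) : Set (ℝ × ℝ) :=
  ⋃ i ∈ Finset.range (2 * j),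
    Set.Ico (i : ℝ) ((i : ℝ) + 1) ×ˢ Set.Ico (0 : ℝ) (2 * (j : ℝ) - i)

open Finset

namespace Int

theorem ite_emod_lt_eq_ediv_sub_ediv {x n c : ℤ} (hn : 0 < n) (hc₀ : 0 ≤ c) (hcn : c ≤ n) :
    (if x % n < c then 1 else 0 : ℤ) = x / n - (x - c) / n := by
  have hx := emod_def x n
  have h₀ := emod_nonneg x hn.ne'
  have h₁ := emod_lt_of_pos x hn
  split_ifs with h
  · have : (x - c) / n = x / n - 1 := by
      rw [ediv_eq_iff_of_pos hn]; constructor <;> linarith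
    omega
  · have : (x - c) / n = x / n := by
      rw [ediv_eq_iff_of_pos hn]; constructor <;> linarith
    omega

end Int

theorem two_mul_sum_range_natCast (n : ℕ) : 2 * ∑ i ∈ range n, (i : ℤ) = n * (n - 1) := by
  induction n with
  | zero => simp
  | succ n ih => rw [sum_range_succ]; push_cast; linarith

section AffineResidues

variable {n : ℕ} {a : ℤ}

theorem injOn_emod_affine (ha : IsCoprime a n) (b : ℤ) :
    Set.InjOn (fun i : ℕ => ((a * i + b) % n).toNat) (range n) := by
  intro i hi k hk hik
  simp only [coe_range, Set.mem_Iio] at hi hk hik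
  have hmod : (a * i + b) % n = (a * k + b) % n := by
    have hn : (0 : ℤ) < n := by omega
    have := Int.emod_nonneg (a * i + b) hn.ne'
    have := Int.emod_nonneg (a * k + b) hn.ne'
    omega
  have hdvd : (n : ℤ) ∣ a * ((k : ℤ) - i) := by
    have := Int.ModEq.dvd hmod
    rwa [show a * k + b - (a * i + b) = a * ((k : ℤ) - i) by ring] at this
  have := Int.eq_zero_of_abs_lt_dvd (ha.symm.dvd_of_dvd_mul_left hdvd)
    (abs_lt.mpr ⟨by omega, by omega⟩)
  omega

theorem sum_range_emod_affine (ha : IsCoprime a n) (b : ℤ) :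
    ∑ i ∈ range n, (a * i + b) % n = ∑ i ∈ range n, (i : ℤ) := by
  have hmaps : Set.MapsTo (fun i : ℕ => ((a * i + b) % n).toNat) (range n) (range n) := by
    intro i hi
    simp only [coe_range, Set.mem_Iio] at hi ⊢
    have := Int.emod_lt_of_pos (a * i + b) (by omega : (0 : ℤ) < n)
    omega
  refine sum_nbij _ hmaps (injOn_emod_affine ha b)
    (surjOn_of_injOn_of_card_le _ hmaps (injOn_emod_affine ha b) le_rfl) fun i hi => ?_
  rw [mem_range] at hi
  exact (Int.toNat_of_nonneg (Int.emod_nonneg _ (by omega))).symm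

theorem two_mul_sum_range_ediv_affine (hn : 0 < n) (ha : IsCoprime a n) (b : ℤ) :
    2 * ∑ i ∈ range n, (a * i + b) / n = (a - 1) * (n - 1) + 2 * b := by
  have hdiv : (n : ℤ) * ∑ i ∈ range n, (a * i + b) / n
      = a * ∑ i ∈ range n, (i : ℤ) + n * b - ∑ i ∈ range n, (i : ℤ) :=
    calc (n : ℤ) * ∑ i ∈ range n, (a * i + b) / n
        = ∑ i ∈ range n, (a * i + b - (a * i + b) % n) := by
          rw [mul_sum]
          exact sum_congr rfl fun i _ => by rw [Int.emod_def]; ring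
      _ = _ := by
          rw [sum_sub_distrib, sum_range_emod_affine ha b, sum_add_distrib, ← mul_sum, sum_const,
            card_range, nsmul_eq_mul]
  apply mul_left_cancel₀ (by positivity : (n : ℤ) ≠ 0)
  linear_combination 2 * hdiv + (a - 1) * two_mul_sum_range_natCast n

theorem two_mul_card_filter_emod_lt (hn : 0 < n) (ha : IsCoprime a n)
    (ha' : IsCoprime (a + 1) n) (b : ℤ) :
    2 * (#{i ∈ range n | (a * (i : ℕ) + b) % n < n - 1 - (i : ℕ)} : ℤ) = n - 1 := by
  have hcard : (#{i ∈ range n | (a * (i : ℕ) + b) % n < n - 1 - (i : ℕ)} : ℤ)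
      = ∑ i ∈ range n, ((a * i + b) / n - ((a + 1) * i + (b + 1)) / n + 1) := by
    rw [card_filter]
    push_cast
    refine sum_congr rfl fun i hi => ?_
    rw [mem_range] at hi
    rw [Int.ite_emod_lt_eq_ediv_sub_ediv (by omega) (by omega) (by omega),
      show a * i + b - (n - 1 - i) = (a + 1) * i + (b + 1) + (-1) * n by ring,
      Int.add_mul_ediv_right _ _ (by omega)]
    ring
  rw [hcard, sum_add_distrib, sum_sub_distrib, sum_const, card_range, nsmul_eq_mul, mul_add,
    mul_sub, two_mul_sum_range_ediv_affine hn ha, two_mul_sum_range_ediv_affine hn ha']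
  ring

end AffineResidues

theorem mem_image_translate_iff {S : Set (ℝ × ℝ)} {a b : ℝ} {p : ℝ × ℝ} :
    p ∈ (fun q : ℝ × ℝ => (a + q.1, b + q.2)) '' S ↔ (p.1 - a, p.2 - b) ∈ S := by
  constructor
  · rintro ⟨q, hq, rfl⟩
    simpa using hq
  · exact fun h => ⟨_, h, by simp⟩

theorem mem_Lam_iff {m j : ℕ} {p : ℝ × ℝ} :
    p ∈ Lam m j ↔ ∃ x y : ℤ, p = ((x : ℝ), (y : ℝ)) ∧ ((2 * j + 1 : ℕ) : ℤ) ∣ y - m * x := by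
  constructor
  · rintro ⟨c₁, c₂, rfl⟩
    exact ⟨c₁, c₁ * m + c₂ * (2 * j + 1), by push_cast; rfl, c₂, by push_cast; ring⟩
  · rintro ⟨x, y, rfl, c, hc⟩
    refine ⟨x, c, ?_⟩
    rw [show y = x * m + c * (2 * j + 1) by push_cast at hc; linarith]
    push_cast
    rfl

theorem intCast_mem_Sstair_iff {j : ℕ} {x y : ℤ} :
    ((x : ℝ), (y : ℝ)) ∈ Sstair j ↔ 0 ≤ x ∧ 0 ≤ y ∧ x + y < 2 * j := by
  simp only [Sstair, Set.mem_iUnion, Set.mem_prod, Set.mem_Ico, mem_range, exists_prop]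
  constructor
  · rintro ⟨i, hi, ⟨hix, hxi⟩, hy, hyx⟩
    have hix : (i : ℤ) ≤ x := by exact_mod_cast hix
    have hxi : x < i + 1 := by exact_mod_cast hxi
    have hyx : y < 2 * j - i := by exact_mod_cast hyx
    refine ⟨by omega, by exact_mod_cast hy, by omega⟩
  · rintro ⟨hx, hy, hxy⟩
    lift x to ℕ using hx
    refine ⟨x, by omega, ⟨by simp, by simp⟩, by exact_mod_cast hy, ?_⟩
    exact_mod_cast (by omega : y < 2 * j - x)

theorem Lam_inter_translate_Sstair_eq_image (m j : ℕ) (s t : ℤ) :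
    Lam m j ∩ (fun p : ℝ × ℝ => ((s : ℝ) + p.1, (t : ℝ) + p.2)) '' Sstair j =
      (fun i : ℕ => (((s + i : ℤ) : ℝ), ((t + (m * i + (m * s - t)) % (2 * j + 1 : ℕ) : ℤ) : ℝ))) ''
        ↑{i ∈ range (2 * j + 1) | (m * (i : ℕ) + (m * s - t)) % (2 * j + 1 : ℕ)
          < (2 * j + 1 : ℕ) - 1 - (i : ℕ)} := by
  ext p
  rw [Set.mem_inter_iff, mem_Lam_iff, mem_image_translate_iff, Set.mem_image]
  simp only [coe_filter, mem_range, Set.mem_ofPred_eq]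
  constructor
  · rintro ⟨⟨x, y, rfl, hdvd⟩, hS⟩
    rw [show ((x : ℝ) - s, (y : ℝ) - t) = (((x - s : ℤ) : ℝ), ((y - t : ℤ) : ℝ)) by push_cast; rfl,
      intCast_mem_Sstair_iff] at hS
    obtain ⟨hx, hy, hxy⟩ := hS
    obtain ⟨i, hi⟩ := Int.eq_ofNat_of_zero_le hx
    have hres : (m * (i : ℤ) + (m * s - t)) % (2 * j + 1 : ℕ) = y - t := by
      rw [← Int.emod_eq_of_lt (b := (2 * j + 1 : ℕ)) hy (by omega)]
      refine Int.modEq_iff_dvd.mpr ?_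
      rwa [show y - t - (m * i + (m * s - t)) = y - m * x by rw [← hi]; ring]
    refine ⟨i, ⟨by omega, by omega⟩, ?_⟩
    rw [hres, show x = s + i by omega, add_sub_cancel]
  · rintro ⟨i, ⟨hi, hlt⟩, rfl⟩
    have hr := Int.emod_nonneg (m * (i : ℤ) + (m * s - t)) (by omega : ((2 * j + 1 : ℕ) : ℤ) ≠ 0)
    refine ⟨⟨_, _, rfl, ?_⟩, ?_⟩
    · have := (Int.mod_modEq (m * (i : ℤ) + (m * s - t)) (2 * j + 1 : ℕ)).symm.dvd
      convert this using 1
      ring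
    · rw [Int.cast_add, Int.cast_add, add_sub_cancel_left, add_sub_cancel_left,
        intCast_mem_Sstair_iff]
      omega

theorem ncard_Lam_inter_translate_Sstair (m j : ℕ) (s t : ℤ) :
    (Lam m j ∩ (fun p : ℝ × ℝ => ((s : ℝ) + p.1, (t : ℝ) + p.2)) '' Sstair j).ncard =
      #{i ∈ range (2 * j + 1) | (m * (i : ℕ) + (m * s - t)) % (2 * j + 1 : ℕ)
          < (2 * j + 1 : ℕ) - 1 - (i : ℕ)} := by
  rw [Lam_inter_translate_Sstair_eq_image, Set.ncard_image_of_injective, Set.ncard_coe_finset]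
  intro i k hik
  have : ((s + i : ℤ) : ℝ) = ((s + k : ℤ) : ℝ) := congrArg Prod.fst hik
  have : s + i = s + k := by exact_mod_cast this
  omega

theorem stmt9_general (j m k : ℕ)
    (hgcd : Nat.gcd m (2 * j + 1) = 1) (hgcd' : Nat.gcd (m + 1) (2 * j + 1) = 1)
    (s t : ℤ)
    (hk : (Lam m j ∩ ((fun p : ℝ × ℝ => ((s : ℝ) + p.1, (t : ℝ) + p.2)) '' Sstair j)).ncard = k) :
    ∀ s' t' : ℤ,
      (Lam m j ∩ ((fun p : ℝ × ℝ => ((s' : ℝ) + p.1, (t' : ℝ) + p.2)) '' Sstair j)).ncard = k := by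
  have hcop : IsCoprime (m : ℤ) (2 * j + 1 : ℕ) := Nat.isCoprime_iff_coprime.mpr hgcd
  have hcop' : IsCoprime ((m : ℤ) + 1) (2 * j + 1 : ℕ) := by
    exact_mod_cast Nat.isCoprime_iff_coprime.mpr hgcd'
  have hcount : ∀ s t : ℤ,
      (Lam m j ∩ ((fun p : ℝ × ℝ => ((s : ℝ) + p.1, (t : ℝ) + p.2)) '' Sstair j)).ncard = j := by
    intro s t
    have := two_mul_card_filter_emod_lt (by omega) hcop hcop' (m * s - t)
    rw [ncard_Lam_inter_translate_Sstair]
    omega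
  intro s' t'
  rw [hcount, ← hk, hcount]

theorem stmt9 (j m k : ℕ) (hj : 1 ≤ j) (hm1 : 1 ≤ m) (hm2 : m ≤ 2 * j + 1)
    (hgcd : Nat.gcd m (2 * j + 1) = 1) (hgcd' : Nat.gcd (m + 1) (2 * j + 1) = 1)
    (s t : ℤ)
    (hk : (Lam m j ∩ ((fun p : ℝ × ℝ => ((s : ℝ) + p.1, (t : ℝ) + p.2)) '' Sstair j)).ncard = k) :
    ∀ s' t' : ℤ,
      (Lam m j ∩ ((fun p : ℝ × ℝ => ((s' : ℝ) + p.1, (t' : ℝ) + p.2)) '' Sstair j)).ncard = k :=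
  stmt9_general j m k hgcd hgcd' s t hk
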